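/- Let S ∈ ℝ^{r×k}, T ∈ ℝ^{(d−r)×k}, D* ∈ ℝ^{r×r} symmetric positive definite with ‖D*‖ = σ₁ and smallest eigenvalue σᵣ. Suppose γ ≤ 0.01/σ₁, ‖S‖ ≤ 2√σ₁, σᵣ(S) ≥ √(σᵣ/2), and ‖T‖ ≤ 0.1√σᵣ. Define M(S) = S − γ(S SᵀS + S TᵀT − D*S). Then ‖D* − M(S)Sᵀ‖ ≤ (1 − γσᵣ/2)‖D* − S Sᵀ‖ + γ‖S Tᵀ‖², where ‖·‖ is the spectral norm and σᵣ(S) the r-th largest singular value of S. -/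

import Mathlib

open Matrix

/-- Spectral (operator) norm of a real matrix, via the induced Euclidean operator norm. -/
noncomputable def specNorm {m n : ℕ} (A : Matrix (Fin m) (Fin n) ℝ) : ℝ :=
  ‖(Matrix.toEuclideanLin (𝕜 := ℝ) A).toContinuousLinearMap‖

/-- Singular values of a real matrix: square roots of the eigenvalues of `A * Aᵀ`. -/
noncomputable def sv {m n : ℕ} (A : Matrix (Fin m) (Fin n) ℝ) (i : Fin m) : ℝ :=
  Real.sqrt ((Matrix.isHermitian_mul_conjTranspose_self A).eigenvalues i)

/-- For an `r × k` matrix, the `r`-th largest (i.e. smallest) singular value. -/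
noncomputable def sigmaR {r k : ℕ} (hr : 0 < r) (A : Matrix (Fin r) (Fin k) ℝ) : ℝ :=
  Finset.univ.inf' ⟨⟨0, hr⟩, Finset.mem_univ _⟩ (sv A)

/-!
One gradient step acts on the error through the identity
`D - M Sᵀ = (D - S Sᵀ) (1 - γ S Sᵀ) + γ (S Tᵀ) (S Tᵀ)ᵀ`.
The eigenvalues of `S Sᵀ` lie between `σᵣ(S)² ≥ σᵣ / 2` and `‖S‖² ≤ 4 σ₁`, and `γ ‖S‖² ≤ 0.04`,
so diagonalising `S Sᵀ` shows that `1 - γ S Sᵀ` has eigenvalues in `[0, 1 - γ σᵣ / 2]`, hence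
operator norm at most `1 - γ σᵣ / 2`; the bound follows by the triangle inequality and
submultiplicativity.
-/

open scoped Matrix.Norms.L2Operator

namespace Matrix

variable {𝕜 : Type*} [RCLike 𝕜] {m n : Type*} [Fintype m] [DecidableEq m] [Fintype n]
  [DecidableEq n]

lemma l2_opNorm_conjStarAlgAut (u : unitary (Matrix m m 𝕜)) (A : Matrix m m 𝕜) :
    ‖Unitary.conjStarAlgAut 𝕜 _ u A‖ = ‖A‖ := by
  rw [Unitary.conjStarAlgAut_apply, CStarRing.norm_mul_mem_unitary _ (Unitary.star_mem u.2),
    CStarRing.norm_coe_unitary_mul]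

lemma l2_opNorm_mul_conjTranspose_self (A : Matrix m n 𝕜) : ‖A * Aᴴ‖ = ‖A‖ ^ 2 := by
  simpa [sq, l2_opNorm_conjTranspose] using l2_opNorm_conjTranspose_mul_self Aᴴ

namespace IsHermitian

variable {A : Matrix m m 𝕜} (hA : A.IsHermitian)

lemma l2_opNorm_eq : ‖A‖ = ‖(RCLike.ofReal ∘ hA.eigenvalues : m → 𝕜)‖ := by
  conv_lhs => rw [hA.spectral_theorem]
  rw [l2_opNorm_conjStarAlgAut, l2_opNorm_diagonal]

lemma abs_eigenvalues_le_l2_opNorm (i : m) : |hA.eigenvalues i| ≤ ‖A‖ := by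
  rw [hA.l2_opNorm_eq, ← RCLike.norm_ofReal (K := 𝕜)]
  exact norm_le_pi_norm (RCLike.ofReal ∘ hA.eigenvalues : m → 𝕜) i

lemma l2_opNorm_one_sub_smul (t : ℝ) :
    ‖1 - t • A‖ = ‖(fun i ↦ ((1 - t * hA.eigenvalues i : ℝ) : 𝕜))‖ := by
  have hdiag : diagonal (fun i ↦ ((1 - t * hA.eigenvalues i : ℝ) : 𝕜)) =
      1 - (t : 𝕜) • diagonal (RCLike.ofReal ∘ hA.eigenvalues) := by
    ext i j
    by_cases h : i = j
    · subst h; simp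
    · simp [h, one_apply_ne]
  rw [← l2_opNorm_diagonal, ← l2_opNorm_conjStarAlgAut hA.eigenvectorUnitary (diagonal _), hdiag,
    map_sub, map_one, map_smul, ← hA.spectral_theorem, RCLike.real_smul_eq_coe_smul (K := 𝕜)]

end IsHermitian

lemma l2_opNorm_one_sub_smul_mul_conjTranspose_self_le [Nonempty m] (A : Matrix m n 𝕜)
    {γ a : ℝ} (hγ : 0 ≤ γ) (hγA : γ * ‖A‖ ^ 2 ≤ 1)
    (ha : ∀ i, a ≤ (isHermitian_mul_conjTranspose_self A).eigenvalues i) :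
    ‖1 - γ • (A * Aᴴ)‖ ≤ 1 - γ * a := by
  set hH := isHermitian_mul_conjTranspose_self A
  rw [hH.l2_opNorm_one_sub_smul]
  refine (pi_norm_le_iff_of_nonempty _).2 fun i ↦ ?_
  have hup : γ * hH.eigenvalues i ≤ 1 := by
    refine le_trans (mul_le_mul_of_nonneg_left ?_ hγ) hγA
    rw [← l2_opNorm_mul_conjTranspose_self]
    exact (le_abs_self _).trans (hH.abs_eigenvalues_le_l2_opNorm i)
  have hlow : γ * a ≤ γ * hH.eigenvalues i := mul_le_mul_of_nonneg_left (ha i) hγ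
  rw [RCLike.norm_ofReal, abs_le]
  constructor <;> linarith

end Matrix

lemma le_eigenvalues_of_sqrt_le_sigmaR {r k : ℕ} (hr : 0 < r) {A : Matrix (Fin r) (Fin k) ℝ}
    {a : ℝ} (ha : √a ≤ sigmaR hr A) (i : Fin r) :
    a ≤ (isHermitian_mul_conjTranspose_self A).eigenvalues i :=
  (Real.sqrt_le_sqrt_iff ((posSemidef_self_mul_conjTranspose A).eigenvalues_nonneg i)).1
    (ha.trans (Finset.inf'_le _ (Finset.mem_univ i)))

def gradStep {R : Type*} [CommRing R] {m n p : Type*} [Fintype m] [Fintype n] [Fintype p]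
    (γ : R) (D : Matrix m m R) (T : Matrix p n R) (S : Matrix m n R) : Matrix m n R :=
  S - γ • (S * Sᵀ * S + S * Tᵀ * T - D * S)

lemma sub_gradStep_mul_transpose {R : Type*} [CommRing R] {m n p : Type*} [Fintype m]
    [DecidableEq m] [Fintype n] [Fintype p] (γ : R) (D : Matrix m m R) (T : Matrix p n R)
    (S : Matrix m n R) :
    D - gradStep γ D T S * Sᵀ = (D - S * Sᵀ) * (1 - γ • (S * Sᵀ)) + γ • (S * Tᵀ * (S * Tᵀ)ᵀ) := by
  simp only [gradStep, Matrix.sub_mul, Matrix.add_mul, Matrix.smul_mul, Matrix.mul_smul,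
    Matrix.mul_sub, Matrix.mul_one, transpose_mul, transpose_transpose, Matrix.mul_assoc,
    smul_sub, smul_add]
  abel

theorem stmt19_general {d r k : ℕ} (hr : 0 < r)
    (S : Matrix (Fin r) (Fin k) ℝ) (T : Matrix (Fin (d - r)) (Fin k) ℝ)
    (D : Matrix (Fin r) (Fin r) ℝ)
    (σ₁ σᵣ γ : ℝ)
    (hγpos : 0 < γ) (hγ : γ ≤ 0.01 / σ₁)
    (hSnorm : specNorm S ≤ 2 * Real.sqrt σ₁)
    (hSmin : Real.sqrt (σᵣ / 2) ≤ sigmaR hr S)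
    (M : Matrix (Fin r) (Fin k) ℝ)
    (hM : M = S - γ • (S * Sᵀ * S + S * Tᵀ * T - D * S)) :
    specNorm (D - M * Sᵀ) ≤
      (1 - γ * σᵣ / 2) * specNorm (D - S * Sᵀ) + γ * specNorm (S * Tᵀ) ^ 2 := by
  have hσ₁ : 0 < σ₁ := by
    by_contra! h
    exact (hγpos.trans_le hγ).not_ge (div_nonpos_of_nonneg_of_nonpos (by norm_num) h)
  have hγS : γ * ‖S‖ ^ 2 ≤ 1 := calc
    γ * ‖S‖ ^ 2 ≤ γ * (2 * √σ₁) ^ 2 := by gcongr; exact hSnorm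
    _ = 4 * (γ * σ₁) := by rw [mul_pow, Real.sq_sqrt hσ₁.le]; ring
    _ ≤ 1 := by linarith [(le_div_iff₀ hσ₁).1 hγ]
  have : Nonempty (Fin r) := ⟨⟨0, hr⟩⟩
  have hcontr := l2_opNorm_one_sub_smul_mul_conjTranspose_self_le S hγpos.le hγS
    (le_eigenvalues_of_sqrt_le_sigmaR hr hSmin)
  have hcross : ‖S * Tᵀ * (S * Tᵀ)ᵀ‖ = ‖S * Tᵀ‖ ^ 2 := by
    rw [← (S * Tᵀ).conjTranspose_eq_transpose_of_trivial, l2_opNorm_mul_conjTranspose_self]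
  rw [conjTranspose_eq_transpose_of_trivial] at hcontr
  subst hM
  calc ‖D - gradStep γ D T S * Sᵀ‖
      = ‖(D - S * Sᵀ) * (1 - γ • (S * Sᵀ)) + γ • (S * Tᵀ * (S * Tᵀ)ᵀ)‖ := by
        rw [sub_gradStep_mul_transpose]
    _ ≤ ‖D - S * Sᵀ‖ * ‖1 - γ • (S * Sᵀ)‖ + γ * ‖S * Tᵀ‖ ^ 2 := by
        refine (norm_add_le _ _).trans (add_le_add (l2_opNorm_mul _ _) ?_)
        rw [norm_smul, Real.norm_of_nonneg hγpos.le, hcross]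
    _ ≤ (1 - γ * σᵣ / 2) * ‖D - S * Sᵀ‖ + γ * ‖S * Tᵀ‖ ^ 2 := by
        rw [mul_comm, mul_div_assoc]
        gcongr

/-- For `M(S) = S - γ (S Sᵀ S + S Tᵀ T - D* S)`, under the stated conditions,
`‖D* - M(S) Sᵀ‖ ≤ (1 - γ σᵣ / 2) ‖D* - S Sᵀ‖ + γ ‖S Tᵀ‖²`. -/
theorem stmt19 {d r k : ℕ} (hr : 0 < r)
    (S : Matrix (Fin r) (Fin k) ℝ) (T : Matrix (Fin (d - r)) (Fin k) ℝ)
    (D : Matrix (Fin r) (Fin r) ℝ) (hD : D.PosDef)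
    (σ₁ σᵣ γ : ℝ)
    (hσ₁ : specNorm D = σ₁)
    (hσᵣ : Finset.univ.inf' ⟨⟨0, hr⟩, Finset.mem_univ _⟩ hD.isHermitian.eigenvalues = σᵣ)
    (hγpos : 0 < γ) (hγ : γ ≤ 0.01 / σ₁)
    (hSnorm : specNorm S ≤ 2 * Real.sqrt σ₁)
    (hSmin : Real.sqrt (σᵣ / 2) ≤ sigmaR hr S)
    (hT : specNorm T ≤ 0.1 * Real.sqrt σᵣ)
    (M : Matrix (Fin r) (Fin k) ℝ)
    (hM : M = S - γ • (S * Sᵀ * S + S * Tᵀ * T - D * S)) :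
    specNorm (D - M * Sᵀ) ≤
      (1 - γ * σᵣ / 2) * specNorm (D - S * Sᵀ) + γ * specNorm (S * Tᵀ) ^ 2 :=
  stmt19_general hr S T D σ₁ σᵣ γ hγpos hγ hSnorm hSmin M hM
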